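/- Let d ≥ 1 be an integer and let G be a graph on vertex set [n] with n > d that is closed in the d-rigidity matroid. Suppose A, B ⊆ [n] are disjoint vertex subsets each inducing a clique in G, and suppose G contains a matching of (d+1 choose 2) edges between A and B (i.e., (d+1 choose 2) pairwise vertex-disjoint edges, each with one endpoint in A and one in B). Then A ∪ B induces a clique in G. -/

import Mathlib

/-!
By duality, a pair `ab` lies in the rigidity closure as soon as every infinitesimal motion `Q` of
the generic framework preserves its length to first order. A clique containing `d + 1` generic,
hence affinely spanning, points moves rigidly: `Q` is `v ↦ S_A v + t_A` on `A` and
`v ↦ S_B v + t_B` on `B`, with `S_A`, `S_B` skew. Each matching edge `xy` gives one linear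
equation `p_y ⬝ (S_A - S_B) p_x = (p_x - p_y) ⬝ (t_A - t_B)` in the `(d+1 choose 2)` coordinates of
`(S_A - S_B, t_A - t_B)`. The determinant of this square system is a polynomial in the coordinates
of the points that equals `1` at a special configuration, so it is nonzero at generic points and
`A ∪ B` moves as a single rigid body. For `d = 1` the matching is a single edge and need not
provide two points of a clique; instead, distinct points on a line force `Q` to be constant along
every edge.
-/

/-- An embedding is generic if its `d·n` coordinates are algebraically independent over `ℚ`. -/
def IsGeneric {n d : ℕ} (pt : Fin n → Fin d → ℝ) : Prop :=
  AlgebraicIndependent ℚ fun vi : Fin n × Fin d => pt vi.1 vi.2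

/-- The rigidity-matrix row of a pair `e`: at the coordinates of a vertex `v ∈ e` it holds
`𝐩(v) − 𝐩(u)` where `u` is the other element of `e`, and it vanishes elsewhere. -/
noncomputable def rRow {n d : ℕ} (pt : Fin n → Fin d → ℝ) (e : Sym2 (Fin n)) :
    Fin n × Fin d → ℝ :=
  fun vi => if h : vi.1 ∈ e then pt vi.1 vi.2 - pt (Sym2.Mem.other h) vi.2 else 0

/-- A graph on `[n]` (with `n > d`) is `d`-rigid if for every generic embedding the span of the
rows of its edges has dimension `d·n − (d+1 choose 2)`. -/
def IsRigid (n d : ℕ) (G : SimpleGraph (Fin n)) : Prop :=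
  ∀ pt : Fin n → Fin d → ℝ, IsGeneric pt →
    Module.finrank ℝ ↥(Submodule.span ℝ (rRow pt '' G.edgeSet)) = d * n - (d + 1).choose 2

/-- The `d`-rigidity closure `C_d(G)` with respect to an embedding `pt`: the graph whose edges
are the pairs `f` with `r_f` in the span of the rows of the edges of `G`. -/
noncomputable def rigidityClosure (n d : ℕ) (pt : Fin n → Fin d → ℝ)
    (G : SimpleGraph (Fin n)) : SimpleGraph (Fin n) where
  Adj x y := x ≠ y ∧ rRow pt s(x, y) ∈ Submodule.span ℝ (rRow pt '' G.edgeSet)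
  symm := ⟨fun x y h => ⟨h.1.symm, by rw [Sym2.eq_swap]; exact h.2⟩⟩
  loopless := ⟨fun x h => h.1 rfl⟩

/-- `G` is closed in the `d`-rigidity matroid: `C_d(G) = G` for every generic embedding. -/
def RigidityClosed (n d : ℕ) (G : SimpleGraph (Fin n)) : Prop :=
  ∀ pt : Fin n → Fin d → ℝ, IsGeneric pt → rigidityClosure n d pt G = G

open Matrix MvPolynomial

section Genericity

variable {n d : ℕ}

theorem exists_isGeneric (n d : ℕ) : ∃ pt : Fin n → Fin d → ℝ, IsGeneric pt := by
  obtain ⟨s, hs⟩ := exists_isTranscendenceBasis ℚ ℝ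
  have hcount : ¬ Cardinal.mk ℝ ≤ Cardinal.aleph0 := by
    rw [Cardinal.mk_real]; exact Cardinal.aleph0_lt_continuum.not_ge
  have : Nonempty s := by
    rw [← not_isEmpty_iff]
    intro hempty
    have := hs.isEmpty_iff_isAlgebraic.1 hempty
    exact hcount (by simpa using Algebra.IsAlgebraic.cardinalMk_le_max ℚ ℝ)
  have : Infinite s := by
    rw [← not_finite_iff_infinite]
    intro hfin
    exact hcount (by simpa using hs.lift_cardinalMk_eq_max_lift.le)
  let f : Fin n × Fin d ↪ s := (Fintype.equivFin _).toEmbedding.trans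
    (Fin.valEmbedding.trans (Infinite.natEmbedding s))
  exact ⟨fun v j => f (v, j), hs.1.comp _ f.injective⟩

theorem IsGeneric.aeval_ne_zero {pt : Fin n → Fin d → ℝ} (hpt : IsGeneric pt)
    {P : MvPolynomial (Fin n × Fin d) ℚ} {pt₀ : Fin n → Fin d → ℝ}
    (h₀ : aeval (fun vi => pt₀ vi.1 vi.2) P ≠ 0) : aeval (fun vi => pt vi.1 vi.2) P ≠ 0 := by
  intro h
  have hP : P = 0 := algebraicIndependent_iff_injective_aeval.1 hpt (h.trans (map_zero _).symm)
  exact h₀ (by rw [hP, map_zero])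

theorem IsGeneric.det_ne_zero {κ : Type*} [Fintype κ] [DecidableEq κ]
    {pt : Fin n → Fin d → ℝ} (hpt : IsGeneric pt) (M : Matrix κ κ (MvPolynomial (Fin n × Fin d) ℚ))
    {pt₀ : Fin n → Fin d → ℝ} (h₀ : (M.map (aeval fun vi => pt₀ vi.1 vi.2)).det ≠ 0) :
    (M.map (aeval fun vi => pt vi.1 vi.2)).det ≠ 0 := by
  have hdet (q : Fin n × Fin d → ℝ) : (M.map (aeval q)).det = aeval q M.det :=
    (AlgHom.map_det _ M).symm
  rw [hdet] at h₀ ⊢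
  exact hpt.aeval_ne_zero h₀

theorem IsGeneric.injective {pt : Fin n → Fin d → ℝ} (hpt : IsGeneric pt) (hd : 0 < d) :
    Function.Injective pt := by
  intro u v huv
  by_contra hne
  let j : Fin d := ⟨0, hd⟩
  refine hpt.aeval_ne_zero (P := X (u, j) - X (v, j)) (pt₀ := fun w _ => (w : ℝ)) ?_ ?_
  · simpa [sub_eq_zero] using fun h => hne (Fin.ext h)
  · simp [huv]

end Genericity

theorem Submodule.mem_span_of_forall_dotProduct_eq_zero {K ι : Type*} [Field K] [Fintype ι]
    [DecidableEq ι] {s : Set (ι → K)} {v : ι → K}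
    (h : ∀ q : ι → K, (∀ u ∈ s, q ⬝ᵥ u = 0) → q ⬝ᵥ v = 0) : v ∈ Submodule.span K s := by
  rw [← Subspace.forall_mem_dualAnnihilator_apply_eq_zero_iff]
  intro φ hφ
  obtain ⟨q, rfl⟩ := (dotProductEquiv K ι).surjective φ
  exact h q fun u hu => (Submodule.mem_dualAnnihilator _).1 hφ u (Submodule.subset_span hu)

section RigidityMatrix

variable {n d : ℕ} (pt : Fin n → Fin d → ℝ)

theorem rRow_apply_left (u v : Fin n) (j : Fin d) :
    rRow pt s(u, v) (u, j) = pt u j - pt v j := by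
  have hu : u ∈ s(u, v) := Sym2.mem_mk_left u v
  simp only [rRow, dif_pos hu, Sym2.congr_right.1 (Sym2.other_spec hu)]

theorem rRow_apply_of_notMem {w : Fin n} {e : Sym2 (Fin n)} (hw : w ∉ e) (j : Fin d) :
    rRow pt e (w, j) = 0 :=
  dif_neg hw

theorem dotProduct_rRow {u v : Fin n} (huv : u ≠ v) (Q : Fin n → Fin d → ℝ) :
    Function.uncurry Q ⬝ᵥ rRow pt s(u, v) = (Q u - Q v) ⬝ᵥ (pt u - pt v) := by
  have hvu : rRow pt s(u, v) = rRow pt s(v, u) := by rw [Sym2.eq_swap]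
  rw [dotProduct, Fintype.sum_prod_type, Fintype.sum_eq_add u v huv]
  · simp only [rRow_apply_left, hvu, dotProduct,
      ← Finset.sum_add_distrib, Pi.sub_apply, Function.uncurry_apply_pair]
    exact Finset.sum_congr rfl fun j _ => by ring
  · rintro w ⟨hwu, hwv⟩
    have hw : w ∉ s(u, v) := by simp [hwu, hwv]
    simp [rRow_apply_of_notMem pt hw]

end RigidityMatrix

def IsInfinitesimalMotion {V : Type*} {d : ℕ} (G : SimpleGraph V) (pt Q : V → Fin d → ℝ) : Prop :=
  ∀ u v, G.Adj u v → (pt u - pt v) ⬝ᵥ (Q u - Q v) = 0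

theorem IsInfinitesimalMotion.dotProduct_eq_zero_of_isClique {V : Type*} {d : ℕ}
    {G : SimpleGraph V} {pt Q : V → Fin d → ℝ} (hQ : IsInfinitesimalMotion G pt Q)
    {C : Set V} (hC : G.IsClique C) : ∀ u ∈ C, ∀ v ∈ C, (pt u - pt v) ⬝ᵥ (Q u - Q v) = 0 := by
  intro u hu v hv
  obtain rfl | huv := eq_or_ne u v
  · simp
  · exact hQ u v (hC hu hv huv)

theorem rigidityClosure_adj_of_forall_motion {n d : ℕ} {pt : Fin n → Fin d → ℝ}
    {G : SimpleGraph (Fin n)} {u v : Fin n} (huv : u ≠ v)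
    (h : ∀ Q, IsInfinitesimalMotion G pt Q → (pt u - pt v) ⬝ᵥ (Q u - Q v) = 0) :
    (rigidityClosure n d pt G).Adj u v := by
  refine ⟨huv, Submodule.mem_span_of_forall_dotProduct_eq_zero fun q hq => ?_⟩
  rw [← Function.uncurry_curry q] at hq ⊢
  have hmotion : IsInfinitesimalMotion G pt (Function.curry q) := by
    intro a b hab
    rw [dotProduct_comm, ← dotProduct_rRow pt hab.ne]
    exact hq _ ⟨s(a, b), hab, rfl⟩
  rw [dotProduct_rRow pt huv, dotProduct_comm]
  exact h _ hmotion

section SkewSymmetric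

variable {ι : Type*} [Fintype ι] {S : Matrix ι ι ℝ}

theorem dotProduct_mulVec_comm_of_transpose_eq_neg (hS : Sᵀ = -S) (u v : ι → ℝ) :
    u ⬝ᵥ S *ᵥ v = -(v ⬝ᵥ S *ᵥ u) := by
  rw [dotProduct_mulVec, ← mulVec_transpose, hS, neg_mulVec, neg_dotProduct, dotProduct_comm]

theorem dotProduct_mulVec_self_of_transpose_eq_neg (hS : Sᵀ = -S) (v : ι → ℝ) :
    v ⬝ᵥ S *ᵥ v = 0 := by
  linarith [dotProduct_mulVec_comm_of_transpose_eq_neg hS v v]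

abbrev LtPair (ι : Type*) [LT ι] := {p : ι × ι // p.1 < p.2}

theorem dotProduct_mulVec_eq_sum_ltPair [LinearOrder ι] (hS : Sᵀ = -S) (u v : ι → ℝ) :
    u ⬝ᵥ S *ᵥ v = ∑ p : LtPair ι, S p.1.2 p.1.1 * (u p.1.2 * v p.1.1 - u p.1.1 * v p.1.2) := by
  have hentry (k l : ι) : S l k = -S k l := by simpa using congrFun (congrFun hS k) l
  set f : ι → ι → ℝ := fun k l => u k * (S k l * v l)
  have hsplit (k l : ι) : f k l = (if k < l then f k l else 0) + (if l < k then f k l else 0) := by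
    rcases lt_trichotomy k l with h | rfl | h
    · simp [h, h.not_gt]
    · simp [f, show S k k = 0 by linarith [hentry k k]]
    · simp [h, h.not_gt]
  calc u ⬝ᵥ S *ᵥ v = ∑ k, ∑ l, f k l := by simp [f, dotProduct, mulVec, Finset.mul_sum]
    _ = ∑ k, ∑ l, (if k < l then f k l else 0) + ∑ k, ∑ l, (if k < l then f l k else 0) := by
      conv_lhs => enter [2, k, 2, l]; rw [hsplit]
      simp only [Finset.sum_add_distrib]
      rw [Finset.sum_comm (f := fun k l => if l < k then f k l else 0)]
    _ = ∑ p : ι × ι, if p.1 < p.2 then S p.2 p.1 * (u p.2 * v p.1 - u p.1 * v p.2) else 0 := by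
      rw [Fintype.sum_prod_type, ← Finset.sum_add_distrib]
      refine Finset.sum_congr rfl fun k _ => ?_
      rw [← Finset.sum_add_distrib]
      refine Finset.sum_congr rfl fun l _ => ?_
      split_ifs
      · simp only [f, hentry l k]; ring
      · simp
    _ = _ := by
      rw [← Finset.sum_filter, Finset.sum_subtype (p := fun p : ι × ι => p.1 < p.2) _ (by simp)]

end SkewSymmetric

section Simplex

variable {d : ℕ}

def simplexMatrix {R : Type*} [Ring R] (p : Fin (d + 1) → Fin d → R) : Matrix (Fin d) (Fin d) R :=
  Matrix.of fun i => p i.succ - p 0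

theorem exists_skew_of_simplex {p q : Fin (d + 1) → Fin d → ℝ} (hp : IsUnit (simplexMatrix p))
    (hq : ∀ i j, (p i - p j) ⬝ᵥ (q i - q j) = 0) :
    ∃ (S : Matrix (Fin d) (Fin d) ℝ) (t : Fin d → ℝ), Sᵀ = -S ∧ ∀ i, q i = S *ᵥ p i + t := by
  set P := simplexMatrix p
  -- `S` maps each edge `p (i+1) - p 0` of the simplex to `q (i+1) - q 0`; the polarized edge
  -- constraints make it skew
  set S := (P⁻¹ * simplexMatrix q)ᵀ
  have hPS : P * Sᵀ = simplexMatrix q := by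
    rw [transpose_transpose, mul_nonsing_inv_cancel_left P _ ((isUnit_iff_isUnit_det P).1 hp)]
  have hrow (i : Fin d) : S *ᵥ (p i.succ - p 0) = q i.succ - q 0 := by
    have := congrFun hPS i
    rwa [mul_apply_eq_vecMul, vecMul_transpose] at this
  have hpolar (i j : Fin (d + 1)) :
      (p i - p 0) ⬝ᵥ (q j - q 0) + (p j - p 0) ⬝ᵥ (q i - q 0) = 0 := by
    have hij := hq i j
    have hi0 := hq i 0
    have hj0 := hq j 0
    simp only [sub_dotProduct, dotProduct_sub] at hij hi0 hj0 ⊢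
    linarith
  have hskew : S + Sᵀ = 0 := by
    have hPSP : P * (S + Sᵀ) * Pᵀ = (simplexMatrix q * Pᵀ)ᵀ + simplexMatrix q * Pᵀ := by
      rw [← hPS, Matrix.mul_add, Matrix.add_mul]
      simp only [transpose_mul, transpose_transpose, Matrix.mul_assoc]
    have hzero : (simplexMatrix q * Pᵀ)ᵀ + simplexMatrix q * Pᵀ = 0 := by
      ext i j
      have := hpolar i.succ j.succ
      rw [dotProduct_comm (p j.succ - p 0)] at this
      simp only [dotProduct, Pi.sub_apply] at this
      simp only [P, simplexMatrix, transpose_mul, transpose_transpose, Matrix.add_apply,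
        Matrix.mul_apply, of_apply, Pi.sub_apply, transpose_apply, Matrix.zero_apply]
      linarith
    have h : P * (S + Sᵀ) * Pᵀ = P * 0 * Pᵀ := by rw [hPSP, hzero, mul_zero, zero_mul]
    exact hp.mul_left_cancel ((isUnit_transpose P).2 hp |>.mul_right_cancel h)
  refine ⟨S, q 0 - S *ᵥ p 0, eq_neg_of_add_eq_zero_right hskew, Fin.cases (by simp) fun i => ?_⟩
  have h := hrow i
  rw [mulVec_sub] at h
  linear_combination -h

theorem eq_mulVec_add_of_simplex {p q : Fin (d + 1) → Fin d → ℝ}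
    (hp : IsUnit (simplexMatrix p)) {S : Matrix (Fin d) (Fin d) ℝ} {t : Fin d → ℝ}
    (hS : Sᵀ = -S) (hq : ∀ i, q i = S *ᵥ p i + t) {w r : Fin d → ℝ}
    (h : ∀ i, (w - p i) ⬝ᵥ (r - q i) = 0) : r = S *ᵥ w + t := by
  set e := r - (S *ᵥ w + t)
  have he (i : Fin (d + 1)) : (w - p i) ⬝ᵥ e = 0 := by
    have hdecomp : r - q i = e + S *ᵥ (w - p i) := by rw [hq, mulVec_sub]; simp only [e]; abel
    simpa [hdecomp, dotProduct_add, dotProduct_mulVec_self_of_transpose_eq_neg hS] using h i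
  have hPe : simplexMatrix p *ᵥ e = 0 := by
    funext i
    change (p i.succ - p 0) ⬝ᵥ e = 0
    rw [← sub_sub_sub_cancel_left (p 0) (p i.succ) w, sub_dotProduct, he, he, sub_zero]
  have he0 : e = 0 := mulVec_injective_iff_isUnit.2 hp (hPe.trans (mulVec_zero _).symm)
  exact sub_eq_zero.1 he0

theorem exists_skew_of_forall_dotProduct_eq_zero {V : Type*} {pt Q : V → Fin d → ℝ}
    {C : Set V} {z : Fin (d + 1) → V} (hzC : ∀ i, z i ∈ C)
    (hz : IsUnit (simplexMatrix (pt ∘ z)))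
    (hQ : ∀ u ∈ C, ∀ v ∈ C, (pt u - pt v) ⬝ᵥ (Q u - Q v) = 0) :
    ∃ (S : Matrix (Fin d) (Fin d) ℝ) (t : Fin d → ℝ), Sᵀ = -S ∧ ∀ v ∈ C, Q v = S *ᵥ pt v + t := by
  obtain ⟨S, t, hS, hst⟩ :=
    exists_skew_of_simplex hz fun i j => hQ (z i) (hzC i) (z j) (hzC j)
  exact ⟨S, t, hS, fun v hv => eq_mulVec_add_of_simplex hz hS hst fun i => hQ v hv (z i) (hzC i)⟩

theorem IsGeneric.isUnit_simplexMatrix {n : ℕ} {pt : Fin n → Fin d → ℝ} (hpt : IsGeneric pt)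
    {z : Fin (d + 1) → Fin n} (hz : Function.Injective z) : IsUnit (simplexMatrix (pt ∘ z)) := by
  have hmap (q : Fin n → Fin d → ℝ) :
      (simplexMatrix fun i j => (X (z i, j) : MvPolynomial (Fin n × Fin d) ℚ)).map
        (aeval fun vi => q vi.1 vi.2) = simplexMatrix (q ∘ z) := by
    ext i j; simp [simplexMatrix]
  rw [isUnit_iff_isUnit_det, isUnit_iff_ne_zero, ← hmap]
  set pt₀ : Fin n → Fin d → ℝ := fun v j => if v = z j.succ then 1 else 0
  refine hpt.det_ne_zero _ (pt₀ := pt₀) ?_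
  have hone : simplexMatrix (pt₀ ∘ z) = 1 := by
    ext i j
    simp [pt₀, simplexMatrix, one_apply, hz.eq_iff, (Fin.succ_ne_zero j).symm]
  rw [hmap pt₀, hone, det_one]
  exact one_ne_zero

end Simplex

section Matching

variable {d : ℕ}

/-- Coordinates of a trivial motion `v ↦ S v + t`: the entries of `t` and the entries of the
skew matrix `S` below the diagonal. -/
abbrev MotionIndex (d : ℕ) := Fin d ⊕ LtPair (Fin d)

theorem card_motionIndex (d : ℕ) : Fintype.card (MotionIndex d) = (d + 1).choose 2 := by
  rw [Fintype.card_sum, Fintype.card_fin, Fintype.card_subtype, Fintype.card_product_filter_lt,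
    Fintype.card_fin, Nat.choose_succ_succ, Nat.choose_one_right]

def motionCoords (S : Matrix (Fin d) (Fin d) ℝ) (t : Fin d → ℝ) : MotionIndex d → ℝ :=
  Sum.elim t fun p => S p.1.2 p.1.1

theorem eq_zero_of_motionCoords_eq_zero {S : Matrix (Fin d) (Fin d) ℝ} {t : Fin d → ℝ}
    (hS : Sᵀ = -S) (h : motionCoords S t = 0) : S = 0 ∧ t = 0 := by
  have hlt {k l : Fin d} (hkl : k < l) : S l k = 0 := congrFun h (Sum.inr ⟨(k, l), hkl⟩)
  have hentry (k l : Fin d) : S l k = -S k l := by simpa using congrFun (congrFun hS k) l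
  refine ⟨?_, funext fun j => congrFun h (Sum.inl j)⟩
  ext k l
  rw [Matrix.zero_apply]
  rcases lt_trichotomy k l with hkl | rfl | hkl
  · linarith [hentry k l, hlt hkl]
  · linarith [hentry k k]
  · exact hlt hkl

def matchingMatrix {R κ : Type*} [CommRing R] (px py : κ → Fin d → R) :
    Matrix κ (MotionIndex d) R :=
  Matrix.of fun c => Sum.elim (py c - px c) fun p =>
    px c p.1.1 * py c p.1.2 - px c p.1.2 * py c p.1.1

theorem matchingMatrix_mulVec_motionCoords {κ : Type*} (px py : κ → Fin d → ℝ)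
    {S : Matrix (Fin d) (Fin d) ℝ} (hS : Sᵀ = -S) (t : Fin d → ℝ) (c : κ) :
    (matchingMatrix px py *ᵥ motionCoords S t) c =
      py c ⬝ᵥ S *ᵥ px c - (px c - py c) ⬝ᵥ t := by
  rw [dotProduct_mulVec_eq_sum_ltPair hS, mulVec, dotProduct, Fintype.sum_sum_type, sub_eq_add_neg,
    add_comm, ← neg_dotProduct, neg_sub, dotProduct]
  simp only [matchingMatrix, motionCoords, of_apply, Sum.elim_inl, Sum.elim_inr]
  congr 1
  exact Finset.sum_congr rfl fun p _ => by ring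

/-- Pairs `(0, eⱼ)` and `(eₖ, eₗ)` for `k < l`, chosen so that `matchingMatrix` becomes block lower
unitriangular. -/
def stdMatching (d : ℕ) : (MotionIndex d → Fin d → ℝ) × (MotionIndex d → Fin d → ℝ) :=
  (Sum.elim 0 fun p => Pi.single p.1.1 1,
    Sum.elim (fun j => Pi.single j 1) fun p => Pi.single p.1.2 1)

theorem det_matchingMatrix_stdMatching (d : ℕ) :
    (matchingMatrix (stdMatching d).1 (stdMatching d).2).det = 1 := by
  set M := matchingMatrix (stdMatching d).1 (stdMatching d).2
  have hblocks : M = fromBlocks 1 0 M.toBlocks₂₁ 1 := by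
    ext (j' | ⟨⟨k', l'⟩, h'⟩) (j | ⟨⟨k, l⟩, h⟩)
    · simp [M, matchingMatrix, stdMatching, one_apply, Pi.single_apply, eq_comm]
    · simp [M, matchingMatrix, stdMatching]
    · rfl
    · have hswap : ¬ (l = k' ∧ k = l') := by
        rintro ⟨rfl, rfl⟩
        exact lt_asymm h h'
      simp only [M, matchingMatrix, stdMatching, of_apply, Sum.elim_inr, fromBlocks_apply₂₂,
        one_apply, Subtype.mk.injEq, Prod.mk.injEq, Pi.single_apply]
      have hzero : (if l = k' then (1 : ℝ) else 0) * (if k = l' then 1 else 0) = 0 := by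
        rcases not_and_or.1 hswap with hne | hne <;> simp [hne]
      rw [hzero, sub_zero]
      by_cases hk : k = k'
      · by_cases hl : l = l'
        · simp [hk, hl]
        · simp [hl, Ne.symm hl]
      · simp [hk, Ne.symm hk]
  rw [hblocks, det_fromBlocks_zero₁₂, det_one, det_one, one_mul]

theorem IsGeneric.isUnit_matchingMatrix {n : ℕ} {pt : Fin n → Fin d → ℝ} (hpt : IsGeneric pt)
    {x y : MotionIndex d → Fin n} (hx : Function.Injective x) (hy : Function.Injective y)
    (hxy : ∀ i j, x i ≠ y j) : IsUnit (matchingMatrix (pt ∘ x) (pt ∘ y)) := by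
  have hmap (q : Fin n → Fin d → ℝ) :
      (matchingMatrix (fun c j => (X (x c, j) : MvPolynomial (Fin n × Fin d) ℚ))
        fun c j => X (y c, j)).map (aeval fun vi => q vi.1 vi.2) =
        matchingMatrix (q ∘ x) (q ∘ y) := by
    ext c (j | p) <;> simp [matchingMatrix]
  set pt₀ : Fin n → Fin d → ℝ :=
    Function.extend x (stdMatching d).1 (Function.extend y (stdMatching d).2 0)
  have hx₀ : pt₀ ∘ x = (stdMatching d).1 := funext (hx.extend_apply _ _)
  have hy₀ : pt₀ ∘ y = (stdMatching d).2 := by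
    funext c
    simp only [Function.comp_apply, pt₀]
    rw [Function.extend_apply' _ _ _ fun ⟨c', hc'⟩ => hxy c' c hc']
    exact hy.extend_apply _ _ c
  rw [isUnit_iff_isUnit_det, isUnit_iff_ne_zero, ← hmap]
  refine hpt.det_ne_zero _ (pt₀ := pt₀) ?_
  rw [hmap pt₀, hx₀, hy₀, det_matchingMatrix_stdMatching]
  exact one_ne_zero

theorem IsGeneric.eq_zero_of_matching {n : ℕ} {pt : Fin n → Fin d → ℝ} (hpt : IsGeneric pt)
    {x y : Fin ((d + 1).choose 2) → Fin n} (hx : Function.Injective x)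
    (hy : Function.Injective y) (hxy : ∀ i j, x i ≠ y j) {S : Matrix (Fin d) (Fin d) ℝ}
    (hS : Sᵀ = -S) {t : Fin d → ℝ}
    (h : ∀ i, pt (y i) ⬝ᵥ S *ᵥ pt (x i) = (pt (x i) - pt (y i)) ⬝ᵥ t) : S = 0 ∧ t = 0 := by
  set e := Fintype.equivFinOfCardEq (card_motionIndex d)
  have hM := hpt.isUnit_matchingMatrix (hx.comp e.injective) (hy.comp e.injective)
    fun i j => hxy (e i) (e j)
  refine eq_zero_of_motionCoords_eq_zero hS (mulVec_injective_iff_isUnit.2 hM ?_)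
  funext c
  rw [matchingMatrix_mulVec_motionCoords _ _ hS, mulVec_zero]
  exact sub_eq_zero.2 (h (e c))

end Matching

theorem sub_dotProduct_trivialMotion_sub {ι : Type*} [Fintype ι] {SA SB : Matrix ι ι ℝ}
    (hSA : SAᵀ = -SA) (hSB : SBᵀ = -SB) (u v tA tB : ι → ℝ) :
    (u - v) ⬝ᵥ ((SA *ᵥ u + tA) - (SB *ᵥ v + tB)) =
      (u - v) ⬝ᵥ (tA - tB) - v ⬝ᵥ (SA - SB) *ᵥ u := by
  have h₁ := dotProduct_mulVec_self_of_transpose_eq_neg hSA u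
  have h₂ := dotProduct_mulVec_self_of_transpose_eq_neg hSB v
  have h₃ := dotProduct_mulVec_comm_of_transpose_eq_neg hSB u v
  simp only [sub_mulVec, dotProduct_sub, sub_dotProduct, dotProduct_add] at h₁ h₂ h₃ ⊢
  linarith

namespace IsInfinitesimalMotion

variable {n : ℕ} {G : SimpleGraph (Fin n)} {A B : Set (Fin n)}

theorem dotProduct_eq_zero_of_matching {d : ℕ} (hd : 2 ≤ d) {pt Q : Fin n → Fin d → ℝ}
    (hpt : IsGeneric pt) (hQ : IsInfinitesimalMotion G pt Q) (hA : G.IsClique A) (hB : G.IsClique B)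
    {x y : Fin ((d + 1).choose 2) → Fin n} (hx : Function.Injective x)
    (hy : Function.Injective y) (hxA : ∀ i, x i ∈ A) (hyB : ∀ i, y i ∈ B)
    (hxy : ∀ i j, x i ≠ y j) (hadj : ∀ i, G.Adj (x i) (y i)) {a b : Fin n} (ha : a ∈ A)
    (hb : b ∈ B) : (pt a - pt b) ⬝ᵥ (Q a - Q b) = 0 := by
  have hm : d + 1 ≤ (d + 1).choose 2 := by
    rw [Nat.choose_two_right]
    exact (Nat.le_div_iff_mul_le two_pos).2 (Nat.mul_le_mul_left _ hd)
  obtain ⟨SA, tA, hSA, hQA⟩ := exists_skew_of_forall_dotProduct_eq_zero (fun i => hxA _)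
    (hpt.isUnit_simplexMatrix (hx.comp (Fin.castLE_injective hm)))
    (hQ.dotProduct_eq_zero_of_isClique hA)
  obtain ⟨SB, tB, hSB, hQB⟩ := exists_skew_of_forall_dotProduct_eq_zero (fun i => hyB _)
    (hpt.isUnit_simplexMatrix (hy.comp (Fin.castLE_injective hm)))
    (hQ.dotProduct_eq_zero_of_isClique hB)
  have hbars (i) : pt (y i) ⬝ᵥ (SA - SB) *ᵥ pt (x i) = (pt (x i) - pt (y i)) ⬝ᵥ (tA - tB) := by
    have h := hQ _ _ (hadj i)
    rw [hQA _ (hxA i), hQB _ (hyB i), sub_dotProduct_trivialMotion_sub hSA hSB] at h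
    linarith
  have hskew : (SA - SB)ᵀ = -(SA - SB) := by rw [transpose_sub, hSA, hSB, neg_sub_neg, neg_sub]
  obtain ⟨hS, ht⟩ := hpt.eq_zero_of_matching hx hy hxy hskew hbars
  rw [hQA a ha, hQB b hb, sub_eq_zero.1 hS, sub_eq_zero.1 ht, add_sub_add_right_eq_sub,
    ← mulVec_sub]
  exact dotProduct_mulVec_self_of_transpose_eq_neg hSB _

theorem eq_of_adj_of_dim_one {pt Q : Fin n → Fin 1 → ℝ} (hpt : IsGeneric pt)
    (hQ : IsInfinitesimalMotion G pt Q) {u v : Fin n} (huv : G.Adj u v) : Q u = Q v := by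
  have h := hQ u v huv
  rw [dotProduct, Fin.sum_univ_one] at h
  have hne : (pt u - pt v) 0 ≠ 0 := fun h0 => huv.ne <| hpt.injective one_pos <|
    funext fun j => by rw [Fin.fin_one_eq_zero j]; exact sub_eq_zero.1 h0
  funext j
  rw [Fin.fin_one_eq_zero j]
  exact sub_eq_zero.1 ((mul_eq_zero.1 h).resolve_left hne)

theorem dotProduct_eq_zero_of_dim_one {pt Q : Fin n → Fin 1 → ℝ} (hpt : IsGeneric pt)
    (hQ : IsInfinitesimalMotion G pt Q) (hA : G.IsClique A) (hB : G.IsClique B)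
    {x₀ y₀ : Fin n} (hx₀ : x₀ ∈ A) (hy₀ : y₀ ∈ B) (hadj : G.Adj x₀ y₀) {a b : Fin n}
    (ha : a ∈ A) (hb : b ∈ B) : (pt a - pt b) ⬝ᵥ (Q a - Q b) = 0 := by
  have hclique {C : Set (Fin n)} (hC : G.IsClique C) {u v : Fin n} (hu : u ∈ C) (hv : v ∈ C) :
      Q u = Q v := by
    obtain rfl | huv := eq_or_ne u v
    · rfl
    · exact hQ.eq_of_adj_of_dim_one hpt (hC hu hv huv)
  rw [hclique hA ha hx₀, hQ.eq_of_adj_of_dim_one hpt hadj, hclique hB hy₀ hb, sub_self,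
    dotProduct_zero]

end IsInfinitesimalMotion

theorem stmt_6_general (d n : ℕ) (hd : 1 ≤ d) (G : SimpleGraph (Fin n))
    (hG : RigidityClosed n d G) (A B : Set (Fin n)) (hAB : Disjoint A B)
    (hA : G.IsClique A) (hB : G.IsClique B)
    (x y : Fin ((d + 1).choose 2) → Fin n)
    (hx : Function.Injective x) (hy : Function.Injective y)
    (hxA : ∀ i, x i ∈ A) (hyB : ∀ i, y i ∈ B)
    (hadj : ∀ i, G.Adj (x i) (y i)) :
    G.IsClique (A ∪ B) := by
  have hxy (i j) : x i ≠ y j := hAB.ne_of_mem (hxA i) (hyB j)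
  have hcross (a) (ha : a ∈ A) (b) (hb : b ∈ B) : G.Adj a b := by
    obtain ⟨pt, hpt⟩ := exists_isGeneric n d
    rw [← hG pt hpt]
    refine rigidityClosure_adj_of_forall_motion (hAB.ne_of_mem ha hb) fun Q hQ => ?_
    obtain rfl | hd := hd.eq_or_lt
    · let i₀ : Fin ((1 + 1).choose 2) := ⟨0, by decide⟩
      exact hQ.dotProduct_eq_zero_of_dim_one hpt hA hB (hxA i₀) (hyB i₀) (hadj i₀) ha hb
    · exact hQ.dotProduct_eq_zero_of_matching hd hpt hA hB hx hy hxA hyB hxy hadj ha hb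
  exact Set.pairwise_union.2
    ⟨hA, hB, fun a ha b hb _ => ⟨hcross a ha b hb, (hcross a ha b hb).symm⟩⟩

/-- If `G` is closed in the `d`-rigidity matroid, `A`, `B` are disjoint cliques
in `G`, and there is a matching of `(d+1 choose 2)` edges of `G` between `A` and `B`, then
`A ∪ B` induces a clique in `G`. -/
theorem stmt_6 (d n : ℕ) (hd : 1 ≤ d) (hn : d < n) (G : SimpleGraph (Fin n))
    (hG : RigidityClosed n d G) (A B : Set (Fin n)) (hAB : Disjoint A B)
    (hA : G.IsClique A) (hB : G.IsClique B)
    (x y : Fin ((d + 1).choose 2) → Fin n)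
    (hx : Function.Injective x) (hy : Function.Injective y)
    (hxA : ∀ i, x i ∈ A) (hyB : ∀ i, y i ∈ B)
    (hadj : ∀ i, G.Adj (x i) (y i)) :
    G.IsClique (A ∪ B) :=
  stmt_6_general d n hd G hG A B hAB hA hB x y hx hy hxA hyB hadj
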